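/- Under the non-symmetric hypotheses above, the sum of the gaps satisfies 12·g₁ = ⟨a,d⟩(2⟨a,d⟩ − 3 s_d − 2 π_a) + s_d(s_d + 3 π_a) − Σ_{i≠j} a_{ii} a_{jj} d_i d_j + (d1d2 + d1d3 + d2d3) + d1d2d3 − 1, where s_d = d1+d2+d3, π_a = a11 a22 a33, ⟨a,d⟩ = Σ a_{ii} d_i. -/

import Mathlib

/-!
Write `H = 1/(1 - z) - G` with `G = ∑_{gaps} z^s`. Clearing denominators gives the polynomial
identity `D = (1 - z) (G D + Q)` with `D = ∏ (1 - z^{d_i})`. Under the shift `z = 1 + t` the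
factor `1 - z` becomes `-t` and each `1 - z^d` becomes `-t (d + C(d,2) t + C(d,3) t² + ⋯)`, so
`Q(1 + t) = t² ∏_i (∑_k C(d_i, k+1) t^k) (1 + t G(1 + t))`. Comparing the coefficients of
`t, …, t⁴` gives four equations. The first two say that `e1 + e2 = ⟨a,d⟩` and
`e1 e2 = Σ_{i<j} a_ii a_jj d_i d_j - d1 d2 d3`, which determines `C(e1,k) + C(e2,k)`; the last two
are linear in `G(1) = #gaps` and `G'(1) = g₁` with leading coefficient `d1 d2 d3`, and
eliminating `G(1)` gives `g₁`.
-/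

namespace Nat

variable {K : Type*} [Field K] [CharZero K]

theorem cast_choose_three (a : ℕ) : (a.choose 3 : K) = a * (a - 1) * (a - 2) / 6 := by
  rw [cast_choose_eq_descPochhammer_div]
  simp [descPochhammer_succ_right, factorial]

theorem cast_choose_four (a : ℕ) :
    (a.choose 4 : K) = a * (a - 1) * (a - 2) * (a - 3) / 24 := by
  rw [cast_choose_eq_descPochhammer_div]
  simp [descPochhammer_succ_right, factorial]

end Nat

namespace Polynomial

variable {R : Type*} [CommRing R]

theorem mk_indicator_eq_mk_one_sub_coe_sum {p : ℕ → Prop} [DecidablePred p]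
    (hfin : {s | ¬ p s}.Finite) :
    (PowerSeries.mk fun s => if p s then (1 : R) else 0) =
      PowerSeries.mk 1 - ((∑ s ∈ hfin.toFinset, X ^ s : R[X]) : PowerSeries R) := by
  ext n
  by_cases hn : p n <;> simp [hn, coeff_X_pow]

theorem eq_one_sub_X_mul_of_mk_one_sub_mul {G D N : R[X]}
    (h : (PowerSeries.mk 1 - (G : PowerSeries R)) * (D : PowerSeries R) = (N : PowerSeries R)) :
    D = (1 - X) * (G * D + N) := by
  rw [← coe_inj]
  push_cast
  rw [← h]
  linear_combination -(D : PowerSeries R) * PowerSeries.mk_one_mul_one_sub_eq_one R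

theorem taylor_one_one_sub_X_pow (d : ℕ) :
    taylor 1 (1 - X ^ d : R[X]) = -(X * divX ((X + 1) ^ d)) := by
  have h := X_mul_divX_add ((X + 1) ^ d : R[X])
  rw [coeff_X_add_one_pow, Nat.choose_zero_right, Nat.cast_one, C_1] at h
  rw [map_sub, taylor_one, taylor_pow, taylor_X, C_1]
  linear_combination h

theorem taylor_one_prod_one_sub_X_pow (d1 d2 d3 : ℕ) :
    taylor 1 ((1 - X ^ d1) * (1 - X ^ d2) * (1 - X ^ d3) : R[X]) =
      -(X ^ 3 * (divX ((X + 1) ^ d1) * divX ((X + 1) ^ d2) * divX ((X + 1) ^ d3))) := by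
  simp only [taylor_mul, taylor_one_one_sub_X_pow]
  ring

theorem taylor_one_eq_X_sq_mul_of_eq_one_sub_X_mul [IsDomain R] {G D N Q : R[X]}
    (h : D = (1 - X) * (G * D + N)) (hD : taylor 1 D = -(X ^ 3 * Q)) :
    taylor 1 N = X ^ 2 * Q * (1 + X * taylor 1 G) := by
  have h' := congrArg (taylor 1) h
  simp only [taylor_mul, map_add, map_sub, taylor_one, taylor_X, C_1, hD] at h'
  apply mul_left_cancel₀ (X_ne_zero : (X : R[X]) ≠ 0)
  linear_combination h'

theorem coeff_divX_X_add_one_pow (d k : ℕ) :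
    (divX ((X + 1) ^ d : R[X])).coeff k = d.choose (k + 1) := by
  rw [coeff_divX, coeff_X_add_one_pow]

theorem mul_mul_coeff_one (p q r : R[X]) :
    (p * q * r).coeff 1 = p.coeff 1 * q.coeff 0 * r.coeff 0 + p.coeff 0 * q.coeff 1 * r.coeff 0
      + p.coeff 0 * q.coeff 0 * r.coeff 1 := by
  simp only [coeff_mul, Finset.Nat.sum_antidiagonal_succ, Finset.Nat.antidiagonal_zero,
    Finset.sum_singleton]
  ring

theorem mul_mul_coeff_two (p q r : R[X]) :
    (p * q * r).coeff 2 = p.coeff 2 * q.coeff 0 * r.coeff 0 + p.coeff 0 * q.coeff 2 * r.coeff 0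
      + p.coeff 0 * q.coeff 0 * r.coeff 2 + p.coeff 1 * q.coeff 1 * r.coeff 0
      + p.coeff 1 * q.coeff 0 * r.coeff 1 + p.coeff 0 * q.coeff 1 * r.coeff 1 := by
  simp only [coeff_mul, Finset.Nat.sum_antidiagonal_succ, Finset.Nat.antidiagonal_zero,
    Finset.sum_singleton]
  ring

theorem coeff_X_sq_mul_mul_one_add_X_mul (Q g : R[X]) :
    (X ^ 2 * Q * (1 + X * g)).coeff 1 = 0 ∧
    (X ^ 2 * Q * (1 + X * g)).coeff 2 = Q.coeff 0 ∧
    (X ^ 2 * Q * (1 + X * g)).coeff 3 = Q.coeff 1 + Q.coeff 0 * g.coeff 0 ∧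
    (X ^ 2 * Q * (1 + X * g)).coeff 4 =
      Q.coeff 2 + Q.coeff 1 * g.coeff 0 + Q.coeff 0 * g.coeff 1 := by
  have h : X ^ 2 * Q * (1 + X * g) = X ^ 2 * Q + X ^ 3 * (Q * g) := by ring
  simp only [h, coeff_add, coeff_X_pow_mul']
  norm_num [coeff_mul, Finset.Nat.sum_antidiagonal_succ]
  ring

theorem coeff_taylor_one_numerator (x1 x2 x3 e1 e2 : ℕ) {k : ℕ} (hk : k ≠ 0) :
    (taylor 1 (1 - X ^ x1 - X ^ x2 - X ^ x3 + X ^ e1 + X ^ e2 : R[X])).coeff k =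
      -(x1.choose k : R) - x2.choose k - x3.choose k + e1.choose k + e2.choose k := by
  simp [coeff_X_add_one_pow, coeff_one, hk]

theorem taylor_one_coeff_numerator_of_mk_one_sub_mul [IsDomain R] (G : R[X])
    (d1 d2 d3 x1 x2 x3 e1 e2 : ℕ)
    (h : (PowerSeries.mk 1 - (G : PowerSeries R)) *
        (((1 - X ^ d1) * (1 - X ^ d2) * (1 - X ^ d3) : R[X]) : PowerSeries R) =
      ((1 - X ^ x1 - X ^ x2 - X ^ x3 + X ^ e1 + X ^ e2 : R[X]) : PowerSeries R)) :
    -(x1 : R) - x2 - x3 + e1 + e2 = 0 ∧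
    -(x1.choose 2 : R) - x2.choose 2 - x3.choose 2 + e1.choose 2 + e2.choose 2 = d1 * d2 * d3 ∧
    -(x1.choose 3 : R) - x2.choose 3 - x3.choose 3 + e1.choose 3 + e2.choose 3 =
      d1.choose 2 * d2 * d3 + d1 * d2.choose 2 * d3 + d1 * d2 * d3.choose 2
        + d1 * d2 * d3 * (taylor 1 G).coeff 0 ∧
    -(x1.choose 4 : R) - x2.choose 4 - x3.choose 4 + e1.choose 4 + e2.choose 4 =
      d1.choose 3 * d2 * d3 + d1 * d2.choose 3 * d3 + d1 * d2 * d3.choose 3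
        + d1.choose 2 * d2.choose 2 * d3 + d1.choose 2 * d2 * d3.choose 2
        + d1 * d2.choose 2 * d3.choose 2
        + (d1.choose 2 * d2 * d3 + d1 * d2.choose 2 * d3 + d1 * d2 * d3.choose 2)
          * (taylor 1 G).coeff 0
        + d1 * d2 * d3 * (taylor 1 G).coeff 1 := by
  have hN := taylor_one_eq_X_sq_mul_of_eq_one_sub_X_mul (eq_one_sub_X_mul_of_mk_one_sub_mul h)
    (taylor_one_prod_one_sub_X_pow d1 d2 d3)
  obtain ⟨c1, c2, c3, c4⟩ := coeff_X_sq_mul_mul_one_add_X_mul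
    (divX ((X + 1) ^ d1) * divX ((X + 1) ^ d2) * divX ((X + 1) ^ d3)) (taylor 1 G)
  rw [← hN, coeff_taylor_one_numerator _ _ _ _ _ (by norm_num)] at c1 c2 c3 c4
  simp only [mul_coeff_zero, mul_mul_coeff_one, mul_mul_coeff_two, coeff_divX_X_add_one_pow,
    Nat.reduceAdd, Nat.choose_one_right] at c1 c2 c3 c4
  exact ⟨c1, c2, c3, c4⟩

theorem taylor_one_sum_X_pow_coeff_one (F : Finset ℕ) :
    (taylor 1 (∑ s ∈ F, X ^ s : R[X])).coeff 1 = ∑ s ∈ F, (s : R) := by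
  simp [coeff_X_add_one_pow]

end Polynomial

theorem twelve_mul_eq_of_taylor_coeff_eqs {K : Type*} [Field K] [CharZero K]
    (d1 d2 d3 a1 a2 a3 e1 e2 : ℕ) (g0 g1 : K) (hd : (d1 * d2 * d3 : K) ≠ 0)
    (hN1 : -((a1 * d1 : ℕ) : K) - (a2 * d2 : ℕ) - (a3 * d3 : ℕ) + e1 + e2 = 0)
    (hN2 : -((a1 * d1).choose 2 : K) - (a2 * d2).choose 2 - (a3 * d3).choose 2
        + e1.choose 2 + e2.choose 2 = d1 * d2 * d3)
    (hN3 : -((a1 * d1).choose 3 : K) - (a2 * d2).choose 3 - (a3 * d3).choose 3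
        + e1.choose 3 + e2.choose 3 =
      d1.choose 2 * d2 * d3 + d1 * d2.choose 2 * d3 + d1 * d2 * d3.choose 2
        + d1 * d2 * d3 * g0)
    (hN4 : -((a1 * d1).choose 4 : K) - (a2 * d2).choose 4 - (a3 * d3).choose 4
        + e1.choose 4 + e2.choose 4 =
      d1.choose 3 * d2 * d3 + d1 * d2.choose 3 * d3 + d1 * d2 * d3.choose 3
        + d1.choose 2 * d2.choose 2 * d3 + d1.choose 2 * d2 * d3.choose 2
        + d1 * d2.choose 2 * d3.choose 2
        + (d1.choose 2 * d2 * d3 + d1 * d2.choose 2 * d3 + d1 * d2 * d3.choose 2) * g0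
        + d1 * d2 * d3 * g1) :
    12 * g1 =
      ((a1 : K) * d1 + a2 * d2 + a3 * d3) *
          (2 * (a1 * d1 + a2 * d2 + a3 * d3) - 3 * (d1 + d2 + d3) - 2 * (a1 * a2 * a3)) +
        (d1 + d2 + d3) * ((d1 + d2 + d3) + 3 * (a1 * a2 * a3)) -
        2 * (a1 * a2 * d1 * d2 + a1 * a3 * d1 * d3 + a2 * a3 * d2 * d3) +
        (d1 * d2 + d1 * d3 + d2 * d3) + d1 * d2 * d3 - 1 := by
  simp only [Nat.cast_choose_two, Nat.cast_choose_three, Nat.cast_choose_four, Nat.cast_mul]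
    at hN1 hN2 hN3 hN4
  set x1 : K := a1 * d1
  set x2 : K := a2 * d2
  set x3 : K := a3 * d3
  have hsum : (e1 : K) + e2 = x1 + x2 + x3 := by linear_combination hN1
  have hprod : (e1 : K) * e2 = x1 * x2 + x1 * x3 + x2 * x3 - d1 * d2 * d3 := by
    linear_combination (e1 + e2 + x1 + x2 + x3 - 1) / 2 * hsum - hN2
  have h3 : (e1 : K) * (e1 - 1) * (e1 - 2) / 6 + e2 * (e2 - 1) * (e2 - 2) / 6 =
      ((e1 + e2) ^ 3 - 3 * (e1 * e2) * (e1 + e2) - 3 * ((e1 + e2) ^ 2 - 2 * (e1 * e2))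
        + 2 * (e1 + e2)) / 6 := by ring
  have h4 : (e1 : K) * (e1 - 1) * (e1 - 2) * (e1 - 3) / 24
      + e2 * (e2 - 1) * (e2 - 2) * (e2 - 3) / 24 =
      ((e1 + e2) ^ 4 - 4 * (e1 + e2) ^ 2 * (e1 * e2) + 2 * (e1 * e2) ^ 2
        - 6 * ((e1 + e2) ^ 3 - 3 * (e1 * e2) * (e1 + e2))
        + 11 * ((e1 + e2) ^ 2 - 2 * (e1 * e2)) - 6 * (e1 + e2)) / 24 := by ring
  rw [hsum, hprod] at h3 h4
  apply mul_left_cancel₀ (pow_ne_zero 2 hd)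
  -- eliminate `g0` between `hN3` and `hN4`
  linear_combination -12 * (d1 * d2 * d3 : K) * (hN4 - h4)
    + 12 * ((d1 : K) * (d1 - 1) / 2 * d2 * d3 + d1 * (d2 * (d2 - 1) / 2) * d3
      + d1 * d2 * (d3 * (d3 - 1) / 2)) * (hN3 - h3)

open PowerSeries in
open scoped Classical in
theorem nonsymmetric_semigroup_gap_sum_general (d1 d2 d3 a11 a22 a33 e1 e2 : ℕ)
    (h1 : 1 < d1) (h12 : d1 < d2) (h23 : d2 < d3)
    (hfin : {s : ℕ | ¬ ∃ x1 x2 x3 : ℕ, s = x1 * d1 + x2 * d2 + x3 * d3}.Finite)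
    (hH : (PowerSeries.mk fun s =>
          if ∃ x1 x2 x3 : ℕ, s = x1 * d1 + x2 * d2 + x3 * d3 then (1 : ℚ) else 0) *
        ((1 - X ^ d1) * (1 - X ^ d2) * (1 - X ^ d3)) =
      1 - X ^ (a11 * d1) - X ^ (a22 * d2) - X ^ (a33 * d3) + X ^ e1 + X ^ e2) :
    (12 : ℤ) * ∑ s ∈ hfin.toFinset, (s : ℤ) =
      ((a11 : ℤ) * d1 + (a22 : ℤ) * d2 + (a33 : ℤ) * d3) *
          (2 * ((a11 : ℤ) * d1 + (a22 : ℤ) * d2 + (a33 : ℤ) * d3) -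
            3 * ((d1 : ℤ) + d2 + d3) - 2 * ((a11 : ℤ) * a22 * a33)) +
        ((d1 : ℤ) + d2 + d3) * (((d1 : ℤ) + d2 + d3) + 3 * ((a11 : ℤ) * a22 * a33)) -
        2 * ((a11 : ℤ) * a22 * d1 * d2 + (a11 : ℤ) * a33 * d1 * d3 +
          (a22 : ℤ) * a33 * d2 * d3) +
        ((d1 : ℤ) * d2 + (d1 : ℤ) * d3 + (d2 : ℤ) * d3) + (d1 : ℤ) * d2 * d3 - 1 := by
  set G : Polynomial ℚ := ∑ s ∈ hfin.toFinset, Polynomial.X ^ s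
  obtain ⟨c1, c2, c3, c4⟩ := Polynomial.taylor_one_coeff_numerator_of_mk_one_sub_mul G
    d1 d2 d3 (a11 * d1) (a22 * d2) (a33 * d3) e1 e2
    (by rw [← Polynomial.mk_indicator_eq_mk_one_sub_coe_sum]; push_cast; exact hH)
  have hd : (d1 * d2 * d3 : ℚ) ≠ 0 := by
    simp only [ne_eq, mul_eq_zero, Nat.cast_eq_zero]
    omega
  have key := twelve_mul_eq_of_taylor_coeff_eqs d1 d2 d3 a11 a22 a33 e1 e2 _ _ hd c1 c2 c3 c4
  rw [Polynomial.taylor_one_sum_X_pow_coeff_one] at key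
  rw [← Int.cast_inj (α := ℚ)]
  push_cast
  linear_combination key

open PowerSeries in
open scoped Classical in
theorem nonsymmetric_semigroup_gap_sum (d1 d2 d3 a11 a22 a33 J e1 e2 : ℕ)
    (h1 : 1 < d1) (h12 : d1 < d2) (h23 : d2 < d3)
    (hgcd : Nat.gcd d1 (Nat.gcd d2 d3) = 1)
    (hJ : (J : ℤ) ^ 2 =
      ((a11 : ℤ) * d1 + (a22 : ℤ) * d2 + (a33 : ℤ) * d3) ^ 2 -
        4 * ((a11 : ℤ) * a22 * d1 * d2 + (a11 : ℤ) * a33 * d1 * d3 +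
          (a22 : ℤ) * a33 * d2 * d3) + 4 * (d1 : ℤ) * d2 * d3)
    (he1 : 2 * e1 + J = a11 * d1 + a22 * d2 + a33 * d3)
    (he2 : 2 * e2 = a11 * d1 + a22 * d2 + a33 * d3 + J)
    (hfin : {s : ℕ | ¬ ∃ x1 x2 x3 : ℕ, s = x1 * d1 + x2 * d2 + x3 * d3}.Finite)
    (hH : (PowerSeries.mk fun s =>
          if ∃ x1 x2 x3 : ℕ, s = x1 * d1 + x2 * d2 + x3 * d3 then (1 : ℚ) else 0) *
        ((1 - X ^ d1) * (1 - X ^ d2) * (1 - X ^ d3)) =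
      1 - X ^ (a11 * d1) - X ^ (a22 * d2) - X ^ (a33 * d3) + X ^ e1 + X ^ e2) :
    (12 : ℤ) * ∑ s ∈ hfin.toFinset, (s : ℤ) =
      ((a11 : ℤ) * d1 + (a22 : ℤ) * d2 + (a33 : ℤ) * d3) *
          (2 * ((a11 : ℤ) * d1 + (a22 : ℤ) * d2 + (a33 : ℤ) * d3) -
            3 * ((d1 : ℤ) + d2 + d3) - 2 * ((a11 : ℤ) * a22 * a33)) +
        ((d1 : ℤ) + d2 + d3) * (((d1 : ℤ) + d2 + d3) + 3 * ((a11 : ℤ) * a22 * a33)) -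
        2 * ((a11 : ℤ) * a22 * d1 * d2 + (a11 : ℤ) * a33 * d1 * d3 +
          (a22 : ℤ) * a33 * d2 * d3) +
        ((d1 : ℤ) * d2 + (d1 : ℤ) * d3 + (d2 : ℤ) * d3) + (d1 : ℤ) * d2 * d3 - 1 :=
  nonsymmetric_semigroup_gap_sum_general d1 d2 d3 a11 a22 a33 e1 e2 h1 h12 h23 hfin hH
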